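/- There exists a thin Eulerian region P such that the minimum number of turns over all tours of P is strictly smaller than the minimum number of turns over all Eulerian tours of P, i.e., tours that traverse every edge of the grid graph of P exactly once. In particular, no turn-minimal tour of such a region is an Eulerian tour. -/

import Mathlib

/-- A pixel is a point of `ℤ × ℤ`. -/
abbrev Pixel : Type := ℤ × ℤ

/-- Two pixels are adjacent if their ℓ¹-distance is 1. -/
def Adjacent (p q : Pixel) : Prop := |p.1 - q.1| + |p.2 - q.2| = 1

/-- A cycle: a cyclic sequence of `k ≥ 2` pixels (encoded as a `k`-periodic
function on `ℤ`) in which consecutive pixels are adjacent. -/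
structure GridCycle where
  k : ℕ
  two_le : 2 ≤ k
  pts : ℤ → Pixel
  periodic : ∀ i : ℤ, pts (i + k) = pts i
  adj : ∀ i : ℤ, Adjacent (pts i) (pts (i + 1))

/-- The set of pixels covered by a cycle. -/
def GridCycle.covers (C : GridCycle) : Set Pixel := Set.range C.pts

/-- Turn cost at position `i`: 0 if the walk goes straight, 2 for a U-turn,
1 for a 90° turn. -/
def GridCycle.turnCost (C : GridCycle) (i : ℤ) : ℕ :=
  if C.pts (i + 1) - C.pts i = C.pts i - C.pts (i - 1) then 0
  else if C.pts (i + 1) - C.pts i = -(C.pts i - C.pts (i - 1)) then 2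
  else 1

/-- The number of turns of a cycle: total turn cost over all positions. -/
def GridCycle.turns (C : GridCycle) : ℕ :=
  ∑ i ∈ Finset.range C.k, C.turnCost (i : ℤ)

/-- A set of pixels is connected under adjacency. -/
def ConnectedIn (P : Set Pixel) : Prop :=
  ∀ p ∈ P, ∀ q ∈ P, Relation.ReflTransGen (fun a b => b ∈ P ∧ Adjacent a b) p q

/-- A region is a finite nonempty set of pixels connected under adjacency. -/
def IsRegion (P : Set Pixel) : Prop := P.Finite ∧ P.Nonempty ∧ ConnectedIn P

/-- A tour of `P`: a cycle whose pixels lie in `P` covering every pixel of `P`. -/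
def IsTour (P : Set Pixel) (C : GridCycle) : Prop := C.covers = P

/-- A cycle cover of `P`: a finite collection of cycles with pixels in `P`
covering every pixel of `P`. -/
def IsCycleCover (P : Set Pixel) (CC : List GridCycle) : Prop :=
  (∀ C ∈ CC, C.covers ⊆ P) ∧ ∀ p ∈ P, ∃ C ∈ CC, p ∈ C.covers

/-- The number of turns of a cycle cover. -/
def coverTurns (CC : List GridCycle) : ℕ := (CC.map GridCycle.turns).sum

/-- A horizontal strip of `P`: a maximal horizontal run of pixels of `P`. -/
def IsHStrip (P S : Set Pixel) : Prop :=
  ∃ x y : ℤ, ∃ ℓ : ℕ, S = {p : Pixel | p.2 = y ∧ x ≤ p.1 ∧ p.1 ≤ x + (ℓ : ℤ)} ∧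
    S ⊆ P ∧ (x - 1, y) ∉ P ∧ (x + (ℓ : ℤ) + 1, y) ∉ P

/-- A vertical strip of `P`: a maximal vertical run of pixels of `P`. -/
def IsVStrip (P S : Set Pixel) : Prop :=
  ∃ x y : ℤ, ∃ ℓ : ℕ, S = {p : Pixel | p.1 = x ∧ y ≤ p.2 ∧ p.2 ≤ y + (ℓ : ℤ)} ∧
    S ⊆ P ∧ (x, y - 1) ∉ P ∧ (x, y + (ℓ : ℤ) + 1) ∉ P

/-- A strip of `P` is a horizontal or vertical strip. -/
def IsStrip (P S : Set Pixel) : Prop := IsHStrip P S ∨ IsVStrip P S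

/-- A strip cover of `P`: a set of strips of `P` whose union is `P`. -/
def IsStripCover (P : Set Pixel) (F : Set (Set Pixel)) : Prop :=
  (∀ S ∈ F, IsStrip P S) ∧ ⋃₀ F = P

/-- The minimum size of a strip cover of `P`. -/
noncomputable def minStripCover (P : Set Pixel) : ℕ :=
  sInf {m | ∃ F, IsStripCover P F ∧ F.ncard = m}

/-- A rook placement in `P`: a subset of `P` no two distinct elements of which
lie in a common strip of `P`. -/
def IsRookPlacement (P R : Set Pixel) : Prop :=
  R ⊆ P ∧ ∀ p ∈ R, ∀ q ∈ R, p ≠ q → ¬∃ S, IsStrip P S ∧ p ∈ S ∧ q ∈ S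

/-- A maximal rook placement: every pixel of `P` lies in a common strip with
some element of `R`. -/
def IsMaximalRookPlacement (P R : Set Pixel) : Prop :=
  IsRookPlacement P R ∧ ∀ p ∈ P, ∃ r ∈ R, ∃ S, IsStrip P S ∧ p ∈ S ∧ r ∈ S

/-- The number of neighbors of a pixel within `P`. -/
noncomputable def nbrCount (P : Set Pixel) (p : Pixel) : ℕ :=
  {q ∈ P | Adjacent p q}.ncard

/-- A region is thin if it contains no 2×2 block of four pixels. -/
def ThinRegion (P : Set Pixel) : Prop :=
  ¬∃ x y : ℤ, (x, y) ∈ P ∧ (x + 1, y) ∈ P ∧ (x, y + 1) ∈ P ∧ (x + 1, y + 1) ∈ P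

/-- A region is Eulerian if every pixel has exactly 2 or 4 neighbors in it. -/
def EulerianRegion (P : Set Pixel) : Prop :=
  ∀ p ∈ P, nbrCount P p = 2 ∨ nbrCount P p = 4

/-- The number of times a collection of cycles traverses the (undirected) grid
edge between pixels `u` and `v`. -/
def edgeUses (CC : List GridCycle) (u v : Pixel) : ℕ :=
  (CC.map (fun C => ((Finset.range C.k).filter
    (fun (i : ℕ) => (C.pts (i : ℤ) = u ∧ C.pts ((i : ℤ) + 1) = v) ∨
      (C.pts (i : ℤ) = v ∧ C.pts ((i : ℤ) + 1) = u))).card)).sum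

/-- The canonical cycle cover of a thin Eulerian region: every grid edge is
traversed exactly once in total, and at every degree-4 pixel the walk goes
straight (turn cost 0). -/
def IsCanonicalCycleCover (P : Set Pixel) (CC : List GridCycle) : Prop :=
  IsCycleCover P CC ∧
  (∀ u ∈ P, ∀ v ∈ P, Adjacent u v → edgeUses CC u v = 1) ∧
  ∀ C ∈ CC, ∀ i : ℤ, nbrCount P (C.pts i) = 4 → C.turnCost i = 0

/-- A tour of `P` is Eulerian if it traverses each edge of the grid graph of
`P` exactly once. -/
def IsEulerianTour (P : Set Pixel) (C : GridCycle) : Prop :=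
  IsTour P C ∧ ∀ u ∈ P, ∀ v ∈ P, Adjacent u v → edgeUses [C] u v = 1

namespace NME

/-! ### Basic helpers -/

instance (p q : Pixel) : Decidable (Adjacent p q) := by unfold Adjacent; infer_instance

def dirL : List Pixel := [(1,0),(-1,0),(0,1),(0,-1)]

lemma adj_dir {u v : Pixel} (h : Adjacent u v) : v - u ∈ dirL := by
  unfold Adjacent at h
  rw [Int.abs_eq_natAbs, Int.abs_eq_natAbs] at h
  have h' : (u.1 - v.1).natAbs + (u.2 - v.2).natAbs = 1 := by exact_mod_cast h
  have : v - u = (v.1 - u.1, v.2 - u.2) := rfl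
  rw [this]
  simp only [dirL, List.mem_cons, List.mem_singleton, Prod.mk.injEq, List.not_mem_nil, or_false]
  omega

lemma adj_comm {u v : Pixel} (h : Adjacent u v) : Adjacent v u := by
  unfold Adjacent at *
  rw [abs_sub_comm, abs_sub_comm (v.2)]
  exact h

lemma adj_ne {u v : Pixel} (h : Adjacent u v) : u ≠ v := by
  rintro rfl
  unfold Adjacent at h
  simp at h

lemma neg_dir {d : Pixel} (h : d ∈ dirL) : -d ∈ dirL := by
  fin_cases h <;> decide

lemma sub_dir (p : Pixel) (a : Pixel) : p - (p - a) = a := by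
  ext <;> simp

lemma add_dir (p : Pixel) (b : Pixel) : p + (b - p) = b := by
  ext <;> simp

/-! ### Cycles from lists -/

def cpts (l : List Pixel) : ℤ → Pixel := fun i => l.getD (i % l.length).toNat (0,0)

lemma emod_bounds (i : ℤ) (n : ℕ) (hn : 0 < n) : 0 ≤ i % n ∧ i % n < n :=
  ⟨Int.emod_nonneg i (by positivity), Int.emod_lt_of_pos i (by exact_mod_cast hn)⟩

lemma emod_add_self (i : ℤ) (n : ℕ) : (i + n) % n = i % n := by
  have : i + (n:ℤ) = i + n * 1 := by ring
  rw [this, Int.add_mul_emod_self_left]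

lemma emod_succ_eq (i : ℤ) (n : ℕ) (hn : 0 < n) :
    ((i + 1) % n).toNat = ((i % n).toNat + 1) % n := by
  have hb := emod_bounds i n hn
  have h1 : (i + 1) % n = ((i % n) + 1) % n := by
    conv_lhs => rw [← Int.emod_add_mul_ediv i n]
    rw [add_assoc, add_comm ((n:ℤ) * (i / n)), ← add_assoc, Int.add_mul_emod_self_left]
  rcases Nat.lt_or_ge ((i % n).toNat + 1) n with h | h
  · have h2 : ((i % n) + 1) % n = (i % n) + 1 := Int.emod_eq_of_lt (by omega) (by omega)
    have h3 : ((i % n).toNat + 1) % n = (i % n).toNat + 1 := Nat.mod_eq_of_lt h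
    omega
  · have he : (i % n) + 1 = (n:ℤ) := by omega
    have h2 : ((i % n) + 1) % n = 0 := by rw [he]; simp
    have h3 : ((i % n).toNat + 1) % n = 0 := by
      have : (i % n).toNat + 1 = n := by omega
      simp [this]
    omega

lemma cpts_periodic (l : List Pixel) : ∀ i : ℤ, cpts l (i + l.length) = cpts l i := by
  intro i; unfold cpts; congr 1; rw [emod_add_self]

lemma cpts_succ (l : List Pixel) (hl : 0 < l.length) (i : ℤ) :
    cpts l (i + 1) = l.getD (((i % l.length).toNat + 1) % l.length) (0,0) := by
  unfold cpts; rw [emod_succ_eq i _ hl]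

def mkCycle (l : List Pixel) (h2 : 2 ≤ l.length)
    (hadj : ∀ n ∈ Finset.range l.length,
      Adjacent (l.getD n (0,0)) (l.getD ((n+1) % l.length) (0,0))) :
    GridCycle where
  k := l.length
  two_le := h2
  pts := cpts l
  periodic := cpts_periodic l
  adj := by
    intro i
    have hl : 0 < l.length := by omega
    rw [cpts_succ l hl]
    exact hadj (i % l.length).toNat (Finset.mem_range.mpr (by have := emod_bounds i _ hl; omega))

lemma range_cpts (l : List Pixel) (hl : 0 < l.length) :
    Set.range (cpts l) = ↑l.toFinset := by
  ext p
  constructor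
  · rintro ⟨i, rfl⟩
    have hb := emod_bounds i l.length hl
    have hm : (i % l.length).toNat < l.length := by omega
    unfold cpts
    rw [List.getD_eq_getElem l (0,0) hm]
    simp only [Finset.mem_coe, List.mem_toFinset]
    exact List.getElem_mem hm
  · intro hp
    simp only [Finset.mem_coe, List.mem_toFinset] at hp
    obtain ⟨n, hn, hget⟩ := List.mem_iff_getElem.mp hp
    refine ⟨(n:ℤ), ?_⟩
    unfold cpts
    have : ((n:ℤ) % l.length) = (n:ℤ) := Int.emod_eq_of_lt (by positivity) (by exact_mod_cast hn)
    rw [this]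
    simp only [Int.toNat_natCast]
    rw [List.getD_eq_getElem l (0,0) hn]
    exact hget

/-- counting helper: number of indices in `range k` satisfying `Q`. -/
def cnt (k : ℕ) (Q : ℤ → Prop) [DecidablePred Q] : ℕ :=
  ((Finset.range k).filter (fun n : ℕ => Q (↑n : ℤ))).card

lemma succ_mod (n k : ℕ) (h : n < k) : (n+1) % k = if n + 1 = k then 0 else n+1 := by
  split
  · next h' => rw [h']; exact Nat.mod_self k
  · next h' => exact Nat.mod_eq_of_lt (by omega)

lemma cnt_shift (k : ℕ) (hk : 0 < k) (Q : ℤ → Prop) [DecidablePred Q]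
    (hper : ∀ i : ℤ, Q (i + k) ↔ Q i) :
    cnt k (fun i => Q (i+1)) = cnt k Q := by
  unfold cnt
  apply Finset.card_bij' (i := fun n _ => (n+1) % k) (j := fun m _ => (m + (k-1)) % k)
  · intro n hn
    simp only [Finset.mem_filter, Finset.mem_range] at hn ⊢
    refine ⟨Nat.mod_lt _ hk, ?_⟩
    rw [succ_mod n k hn.1]
    split
    · next h' =>
      have h2 := hper (((n:ℤ)+1) - k)
      rw [sub_add_cancel] at h2
      have h0 : ((0:ℕ):ℤ) = ((n:ℤ)+1) - k := by push_cast [← h']; ring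
      rw [h0]
      exact h2.mp hn.2
    · next h' => exact_mod_cast hn.2
  · intro m hm
    simp only [Finset.mem_filter, Finset.mem_range] at hm ⊢
    refine ⟨Nat.mod_lt _ hk, ?_⟩
    rcases Nat.eq_zero_or_pos m with rfl | hpos
    · have he : (0 + (k-1)) % k = k - 1 := by
        rw [Nat.zero_add]; exact Nat.mod_eq_of_lt (by omega)
      rw [he]
      have : ((k - 1 : ℕ) : ℤ) + 1 = ((0:ℤ) + k) := by push_cast [Nat.cast_sub (by omega : 1 ≤ k)]; ring
      rw [this, hper 0]
      exact hm.2
    · have he : (m + (k-1)) % k = m - 1 := by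
        have : m + (k-1) = (m-1) + k := by omega
        rw [this, Nat.add_mod_right]
        exact Nat.mod_eq_of_lt (by omega)
      rw [he]
      have : ((m - 1 : ℕ) : ℤ) + 1 = (m:ℤ) := by push_cast [Nat.cast_sub hpos]; ring
      rw [this]
      exact hm.2
  · intro n hn
    simp only [Finset.mem_filter, Finset.mem_range] at hn
    rw [succ_mod n k hn.1]
    split
    · next h' => have : k - 1 < k := by omega
                 rw [Nat.zero_add, Nat.mod_eq_of_lt this]; omega
    · next h' => have : n + 1 + (k-1) = n + k := by omega
                 rw [this, Nat.add_mod_right, Nat.mod_eq_of_lt hn.1]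
  · intro m hm
    simp only [Finset.mem_filter, Finset.mem_range] at hm
    rcases Nat.eq_zero_or_pos m with rfl | hpos
    · have he : (0 + (k-1)) % k = k - 1 := by
        rw [Nat.zero_add]; exact Nat.mod_eq_of_lt (by omega)
      rw [he]
      have : k - 1 + 1 = k := by omega
      rw [this, Nat.mod_self]
    · have he : (m + (k-1)) % k = m - 1 := by
        have : m + (k-1) = (m-1) + k := by omega
        rw [this, Nat.add_mod_right]
        exact Nat.mod_eq_of_lt (by omega)
      rw [he]
      have : m - 1 + 1 = m := by omega
      rw [this, Nat.mod_eq_of_lt hm.1]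


/-! ### The region -/

def inRing (x1 x2 y1 y2 : ℤ) (p : Pixel) : Bool :=
  (x1 ≤ p.1 && p.1 ≤ x2 && y1 ≤ p.2 && p.2 ≤ y2) &&
  (p.1 = x1 || p.1 = x2 || p.2 = y1 || p.2 = y2)

def memN (p : Pixel) : Bool := inRing (-3) 3 1 5 p
def memE (p : Pixel) : Bool := inRing 1 5 (-3) 3 p
def memS (p : Pixel) : Bool := inRing (-3) 3 (-5) (-1) p
def memW (p : Pixel) : Bool := inRing (-5) (-1) (-3) 3 p
def memP (p : Pixel) : Bool := memN p || memE p || memS p || memW p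

def box : Finset Pixel := (@Finset.Icc ℤ _ Int.instLocallyFiniteOrder (-5) 5) ×ˢ (@Finset.Icc ℤ _ Int.instLocallyFiniteOrder (-5) 5)
def Pfin : Finset Pixel := box.filter (fun p => memP p)

lemma mem_Pfin_iff (p : Pixel) : p ∈ Pfin ↔ memP p = true := by
  constructor
  · intro h; exact (Finset.mem_filter.mp h).2
  · intro h
    refine Finset.mem_filter.mpr ⟨?_, h⟩
    simp only [memP, memN, memE, memS, memW, inRing, Bool.or_eq_true, Bool.and_eq_true,
      decide_eq_true_eq] at h
    simp only [box, Finset.mem_product, Finset.mem_Icc]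
    omega

def classOf (u v : Pixel) : ℕ :=
  if memN u && memN v then 0
  else if memE u && memE v then 1
  else if memS u && memS v then 2
  else 3

def cornersF : Finset Pixel := {((-5:ℤ), (-3:ℤ)), ((-5:ℤ), (3:ℤ)), ((-3:ℤ), (-5:ℤ)), ((-3:ℤ), (-1:ℤ)), ((-3:ℤ), (1:ℤ)), ((-3:ℤ), (5:ℤ)), ((-1:ℤ), (-3:ℤ)), ((-1:ℤ), (3:ℤ)), ((1:ℤ), (-3:ℤ)), ((1:ℤ), (3:ℤ)), ((3:ℤ), (-5:ℤ)), ((3:ℤ), (-1:ℤ)), ((3:ℤ), (1:ℤ)), ((3:ℤ), (5:ℤ)), ((5:ℤ), (-3:ℤ)), ((5:ℤ), (3:ℤ))}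

def crossF : Finset Pixel := {((1:ℤ), (1:ℤ)), ((3:ℤ), (3:ℤ)), ((1:ℤ), (-1:ℤ)), ((3:ℤ), (-3:ℤ)), ((-1:ℤ), (-1:ℤ)), ((-3:ℤ), (-3:ℤ)), ((-1:ℤ), (1:ℤ)), ((-3:ℤ), (3:ℤ))}

def crossPair (p : Pixel) : ℕ × ℕ :=
  if p = (1,1) ∨ p = (3,3) then (0,1)
  else if p = (1,-1) ∨ p = (3,-3) then (1,2)
  else if p = (-1,-1) ∨ p = (-3,-3) then (2,3)
  else (0,3)

def APfin : Finset (ℕ × ℕ) := {(0,1),(1,2),(2,3),(0,3)}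

def tourList : List Pixel := [((-1:ℤ), (1:ℤ)), ((0:ℤ), (1:ℤ)), ((1:ℤ), (1:ℤ)), ((2:ℤ), (1:ℤ)), ((3:ℤ), (1:ℤ)), ((3:ℤ), (2:ℤ)), ((3:ℤ), (3:ℤ)), ((3:ℤ), (4:ℤ)), ((3:ℤ), (5:ℤ)), ((2:ℤ), (5:ℤ)), ((1:ℤ), (5:ℤ)), ((0:ℤ), (5:ℤ)), ((-1:ℤ), (5:ℤ)), ((-2:ℤ), (5:ℤ)), ((-3:ℤ), (5:ℤ)), ((-3:ℤ), (4:ℤ)), ((-3:ℤ), (3:ℤ)), ((-3:ℤ), (2:ℤ)), ((-3:ℤ), (1:ℤ)), ((-2:ℤ), (1:ℤ)), ((-1:ℤ), (1:ℤ)), ((0:ℤ), (1:ℤ)), ((1:ℤ), (1:ℤ)), ((1:ℤ), (0:ℤ)), ((1:ℤ), (-1:ℤ)), ((1:ℤ), (-2:ℤ)), ((1:ℤ), (-3:ℤ)), ((2:ℤ), (-3:ℤ)), ((3:ℤ), (-3:ℤ)), ((4:ℤ), (-3:ℤ)), ((5:ℤ), (-3:ℤ)), ((5:ℤ), (-2:ℤ)),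 ((5:ℤ), (-1:ℤ)), ((5:ℤ), (0:ℤ)), ((5:ℤ), (1:ℤ)), ((5:ℤ), (2:ℤ)), ((5:ℤ), (3:ℤ)), ((4:ℤ), (3:ℤ)), ((3:ℤ), (3:ℤ)), ((2:ℤ), (3:ℤ)), ((1:ℤ), (3:ℤ)), ((1:ℤ), (2:ℤ)), ((1:ℤ), (1:ℤ)), ((1:ℤ), (0:ℤ)), ((1:ℤ), (-1:ℤ)), ((0:ℤ), (-1:ℤ)), ((-1:ℤ), (-1:ℤ)), ((-2:ℤ), (-1:ℤ)), ((-3:ℤ), (-1:ℤ)), ((-3:ℤ), (-2:ℤ)), ((-3:ℤ), (-3:ℤ)), ((-3:ℤ), (-4:ℤ)), ((-3:ℤ), (-5:ℤ)), ((-2:ℤ), (-5:ℤ)), ((-1:ℤ), (-5:ℤ)), ((0:ℤ), (-5:ℤ)), ((1:ℤ), (-5:ℤ)), ((2:ℤ), (-5:ℤ)), ((3:ℤ), (-5:ℤ)), ((3:ℤ), (-4:ℤ)), ((3:ℤ), (-3:ℤ)), ((3:ℤ), (-2:ℤ)), ((3:ℤ), (-1:ℤ)), ((2:ℤ), (-1:ℤ)),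 ((1:ℤ), (-1:ℤ)), ((0:ℤ), (-1:ℤ)), ((-1:ℤ), (-1:ℤ)), ((-1:ℤ), (0:ℤ)), ((-1:ℤ), (1:ℤ)), ((-1:ℤ), (2:ℤ)), ((-1:ℤ), (3:ℤ)), ((-2:ℤ), (3:ℤ)), ((-3:ℤ), (3:ℤ)), ((-4:ℤ), (3:ℤ)), ((-5:ℤ), (3:ℤ)), ((-5:ℤ), (2:ℤ)), ((-5:ℤ), (1:ℤ)), ((-5:ℤ), (0:ℤ)), ((-5:ℤ), (-1:ℤ)), ((-5:ℤ), (-2:ℤ)), ((-5:ℤ), (-3:ℤ)), ((-4:ℤ), (-3:ℤ)), ((-3:ℤ), (-3:ℤ)), ((-2:ℤ), (-3:ℤ)), ((-1:ℤ), (-3:ℤ)), ((-1:ℤ), (-2:ℤ)), ((-1:ℤ), (-1:ℤ)), ((-1:ℤ), (0:ℤ))]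

def eulList : List Pixel := [((-1:ℤ), (1:ℤ)), ((0:ℤ), (1:ℤ)), ((1:ℤ), (1:ℤ)), ((2:ℤ), (1:ℤ)), ((3:ℤ), (1:ℤ)), ((3:ℤ), (2:ℤ)), ((3:ℤ), (3:ℤ)), ((2:ℤ), (3:ℤ)), ((1:ℤ), (3:ℤ)), ((1:ℤ), (2:ℤ)), ((1:ℤ), (1:ℤ)), ((1:ℤ), (0:ℤ)), ((1:ℤ), (-1:ℤ)), ((1:ℤ), (-2:ℤ)), ((1:ℤ), (-3:ℤ)), ((2:ℤ), (-3:ℤ)), ((3:ℤ), (-3:ℤ)), ((3:ℤ), (-4:ℤ)), ((3:ℤ), (-5:ℤ)), ((2:ℤ), (-5:ℤ)), ((1:ℤ), (-5:ℤ)), ((0:ℤ), (-5:ℤ)), ((-1:ℤ), (-5:ℤ)), ((-2:ℤ), (-5:ℤ)), ((-3:ℤ), (-5:ℤ)), ((-3:ℤ), (-4:ℤ)), ((-3:ℤ), (-3:ℤ)), ((-3:ℤ), (-2:ℤ)), ((-3:ℤ), (-1:ℤ)), ((-2:ℤ), (-1:ℤ)), ((-1:ℤ), (-1:ℤ)), ((0:ℤ),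 (-1:ℤ)), ((1:ℤ), (-1:ℤ)), ((2:ℤ), (-1:ℤ)), ((3:ℤ), (-1:ℤ)), ((3:ℤ), (-2:ℤ)), ((3:ℤ), (-3:ℤ)), ((4:ℤ), (-3:ℤ)), ((5:ℤ), (-3:ℤ)), ((5:ℤ), (-2:ℤ)), ((5:ℤ), (-1:ℤ)), ((5:ℤ), (0:ℤ)), ((5:ℤ), (1:ℤ)), ((5:ℤ), (2:ℤ)), ((5:ℤ), (3:ℤ)), ((4:ℤ), (3:ℤ)), ((3:ℤ), (3:ℤ)), ((3:ℤ), (4:ℤ)), ((3:ℤ), (5:ℤ)), ((2:ℤ), (5:ℤ)), ((1:ℤ), (5:ℤ)), ((0:ℤ), (5:ℤ)), ((-1:ℤ), (5:ℤ)), ((-2:ℤ), (5:ℤ)), ((-3:ℤ), (5:ℤ)), ((-3:ℤ), (4:ℤ)), ((-3:ℤ), (3:ℤ)), ((-3:ℤ), (2:ℤ)), ((-3:ℤ), (1:ℤ)), ((-2:ℤ), (1:ℤ)), ((-1:ℤ), (1:ℤ)), ((-1:ℤ), (0:ℤ)), ((-1:ℤ), (-1:ℤ)), ((-1:ℤ),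 (-2:ℤ)), ((-1:ℤ), (-3:ℤ)), ((-2:ℤ), (-3:ℤ)), ((-3:ℤ), (-3:ℤ)), ((-4:ℤ), (-3:ℤ)), ((-5:ℤ), (-3:ℤ)), ((-5:ℤ), (-2:ℤ)), ((-5:ℤ), (-1:ℤ)), ((-5:ℤ), (0:ℤ)), ((-5:ℤ), (1:ℤ)), ((-5:ℤ), (2:ℤ)), ((-5:ℤ), (3:ℤ)), ((-4:ℤ), (3:ℤ)), ((-3:ℤ), (3:ℤ)), ((-2:ℤ), (3:ℤ)), ((-1:ℤ), (3:ℤ)), ((-1:ℤ), (2:ℤ))]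

/-- turn cost of a step pair of directions -/
def tc (d e : Pixel) : ℕ := if e = d then 0 else if e = -d then 2 else 1

/-! ### Decidable facts about the region -/

lemma cornersF_subset : ∀ p ∈ cornersF, p ∈ Pfin := by decide
lemma crossF_subset : ∀ p ∈ crossF, p ∈ Pfin := by decide
lemma cornersF_card : cornersF.card = 16 := by decide
lemma crossPair_mem_AP : ∀ p ∈ crossF, crossPair p ∈ APfin := by decide
lemma crossPair_ne : ∀ p ∈ crossF, (crossPair p).1 ≠ (crossPair p).2 := by decide

lemma fact_thin : ∀ p ∈ Pfin,
    ¬(memP (p.1+1, p.2) = true ∧ memP (p.1, p.2+1) = true ∧ memP (p.1+1, p.2+1) = true) := by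
  decide

lemma fact_deg : ∀ p ∈ Pfin,
    (Pfin.filter (fun q => Adjacent p q)).card = 2 ∨
    (Pfin.filter (fun q => Adjacent p q)).card = 4 := by
  decide

/-- FACT1: pointwise turn-cost lower bound. -/
lemma fact1 : ∀ p ∈ Pfin, ∀ d1 ∈ dirL, ∀ d2 ∈ dirL,
    memP (p - d1) = true → memP (p + d2) = true →
    ((if p ∈ cornersF then 1 else 0) +
     (if classOf (p - d1) p ≠ classOf p (p + d2) then 1 else 0) : ℕ) ≤ tc d1 d2 := by
  decide

/-- FACT5: class changes are localized at crossings, with the right pair. -/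
lemma fact5 : ∀ p ∈ Pfin, ∀ d1 ∈ dirL, ∀ d2 ∈ dirL,
    memP (p - d1) = true → memP (p + d2) = true →
    classOf (p - d1) p ≠ classOf p (p + d2) →
    p ∈ crossF ∧
      (min (classOf (p - d1) p) (classOf p (p + d2)),
       max (classOf (p - d1) p) (classOf p (p + d2))) = crossPair p := by
  decide

/-- FACT6: at a crossing, incident edge classes are among the crossing's pair. -/
lemma fact6in : ∀ p ∈ crossF, ∀ d ∈ dirL, memP (p - d) = true →
    classOf (p - d) p = (crossPair p).1 ∨ classOf (p - d) p = (crossPair p).2 := by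
  decide

lemma fact6out : ∀ p ∈ crossF, ∀ d ∈ dirL, memP (p + d) = true →
    classOf p (p + d) = (crossPair p).1 ∨ classOf p (p + d) = (crossPair p).2 := by
  decide

/-- FACT7: class symmetry at crossings. -/
lemma fact7 : ∀ p ∈ crossF, ∀ d ∈ dirL, memP (p + d) = true →
    classOf (p + d) p = classOf p (p + d) := by
  decide

/-- FACT8: each crossing has exactly two neighbours in its first class. -/
lemma fact8 : ∀ p ∈ crossF,
    (Pfin.filter (fun v => Adjacent p v ∧ classOf p v = (crossPair p).1)).card = 2 := by
  decide

/-- FACT2: classes at the private pixels. -/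
lemma fact2 : ∀ d ∈ dirL,
    (memP (((0:ℤ),(5:ℤ)) + d) = true → classOf (0,5) ((0,5) + d) = 0) ∧
    (memP (((5:ℤ),(0:ℤ)) + d) = true → classOf (5,0) ((5,0) + d) = 1) ∧
    (memP (((0:ℤ),(-5:ℤ)) + d) = true → classOf (0,-5) ((0,-5) + d) = 2) ∧
    (memP (((-5:ℤ),(0:ℤ)) + d) = true → classOf (-5,0) ((-5,0) + d) = 3) := by
  decide

lemma privN_mem : ((0:ℤ),(5:ℤ)) ∈ Pfin := by decide
lemma privE_mem : ((5:ℤ),(0:ℤ)) ∈ Pfin := by decide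
lemma privS_mem : ((0:ℤ),(-5:ℤ)) ∈ Pfin := by decide
lemma privW_mem : ((-5:ℤ),(0:ℤ)) ∈ Pfin := by decide

lemma tourList_len : 2 ≤ tourList.length := by decide
set_option maxRecDepth 100000 in
lemma tourList_adj : ∀ n ∈ Finset.range tourList.length,
    Adjacent (tourList.getD n (0,0)) (tourList.getD ((n+1) % tourList.length) (0,0)) := by
  decide
lemma tourList_toFinset : tourList.toFinset = Pfin := by decide

lemma eulList_len : 2 ≤ eulList.length := by decide
lemma eulList_adj : ∀ n ∈ Finset.range eulList.length,
    Adjacent (eulList.getD n (0,0)) (eulList.getD ((n+1) % eulList.length) (0,0)) := by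
  decide
lemma eulList_toFinset : eulList.toFinset = Pfin := by decide

def tourC : GridCycle := mkCycle tourList tourList_len tourList_adj
def eulC : GridCycle := mkCycle eulList eulList_len eulList_adj

lemma tourC_turns : tourC.turns = 20 := by decide

set_option maxHeartbeats 16000000 in
set_option maxRecDepth 100000 in
lemma eulC_edges : ∀ u ∈ Pfin, ∀ v ∈ Pfin, Adjacent u v → edgeUses [eulC] u v = 1 := by
  decide


/-! ### Arbitrary cycles covering the region -/

def clC (C : GridCycle) (i : ℤ) : ℕ := classOf (C.pts i) (C.pts (i+1))

def chgC (C : GridCycle) (i : ℤ) : Prop := clC C (i-1) ≠ clC C i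

instance (C : GridCycle) (i : ℤ) : Decidable (chgC C i) := by unfold chgC; infer_instance

def pairC (C : GridCycle) (i : ℤ) : ℕ × ℕ :=
  (min (clC C (i-1)) (clC C i), max (clC C (i-1)) (clC C i))

def cA (C : GridCycle) : ℕ := cnt C.k (fun i => C.pts i ∈ cornersF)
def cB (C : GridCycle) : ℕ := cnt C.k (fun i => chgC C i)
def cPair (C : GridCycle) (e : ℕ × ℕ) : ℕ := cnt C.k (fun i => chgC C i ∧ pairC C i = e)
def cPix (C : GridCycle) (p : Pixel) : ℕ := cnt C.k (fun i => chgC C i ∧ C.pts i = p)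

section ArbCycle

variable {C : GridCycle}

lemma k_pos (C : GridCycle) : 0 < C.k := by have := C.two_le; omega

lemma pts_mem (hcov : C.covers = ↑Pfin) (i : ℤ) : C.pts i ∈ Pfin := by
  have h : C.pts i ∈ C.covers := ⟨i, rfl⟩
  rw [hcov] at h
  exact Finset.mem_coe.mp h

lemma pts_add_mul (C : GridCycle) (i : ℤ) (t : ℤ) : C.pts (i + C.k * t) = C.pts i := by
  induction t using Int.induction_on with
  | zero => simp
  | succ n ih =>
    have e : i + (C.k:ℤ) * (n+1) = (i + C.k * n) + C.k := by push_cast; ring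
    rw [e, C.periodic, ih]
  | pred n ih =>
    have hper := C.periodic (i + (C.k:ℤ) * (-(n:ℤ) - 1))
    rw [show i + (C.k:ℤ) * (-(n:ℤ) - 1) + C.k = i + C.k * (-(n:ℤ)) from by ring] at hper
    exact hper.symm.trans ih

lemma pts_emod (C : GridCycle) (i : ℤ) : C.pts (i % C.k) = C.pts i := by
  conv_rhs => rw [show i = i % C.k + C.k * (i / C.k) from by
    rw [Int.emod_add_mul_ediv i C.k]]
  rw [pts_add_mul]

lemma exists_idx (hcov : C.covers = ↑Pfin) {p : Pixel} (hp : p ∈ Pfin) :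
    ∃ n ∈ Finset.range C.k, C.pts ↑n = p := by
  have h : p ∈ C.covers := by rw [hcov]; exact Finset.mem_coe.mpr hp
  obtain ⟨j, hj⟩ := h
  have hb := emod_bounds j C.k (k_pos C)
  refine ⟨(j % C.k).toNat, Finset.mem_range.mpr (by omega), ?_⟩
  rw [show (((j % C.k).toNat : ℤ)) = j % C.k from Int.toNat_of_nonneg hb.1 ▸ rfl]
  rw [pts_emod]
  exact hj

lemma sub_add_one (i : ℤ) : i - 1 + 1 = i := by ring

/-- the in-direction at position `i` -/
lemma din_mem (C : GridCycle) (i : ℤ) : C.pts i - C.pts (i-1) ∈ dirL := by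
  have h := C.adj (i-1)
  rw [sub_add_one] at h
  exact adj_dir h

lemma dout_mem (C : GridCycle) (i : ℤ) : C.pts (i+1) - C.pts i ∈ dirL :=
  adj_dir (C.adj i)

lemma clC_pred (C : GridCycle) (i : ℤ) : clC C (i-1) = classOf (C.pts (i-1)) (C.pts i) := by
  unfold clC; rw [sub_add_one]

/-- Step 1: pointwise turn-cost bound. -/
lemma turns_ge (hcov : C.covers = ↑Pfin) : cA C + cB C ≤ C.turns := by
  have key : ∀ n ∈ Finset.range C.k,
      ((if C.pts ↑n ∈ cornersF then 1 else 0) + (if chgC C ↑n then 1 else 0) : ℕ)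
        ≤ C.turnCost ↑n := by
    intro n _
    set i : ℤ := (n : ℤ) with hi
    have h1 : Adjacent (C.pts (i-1)) (C.pts i) := by
      have := C.adj (i-1); rwa [sub_add_one] at this
    have hm1 : memP (C.pts i - (C.pts i - C.pts (i-1))) = true := by
      rw [sub_dir]; exact (mem_Pfin_iff _).mp (pts_mem hcov (i-1))
    have hm2 : memP (C.pts i + (C.pts (i+1) - C.pts i)) = true := by
      rw [add_dir]; exact (mem_Pfin_iff _).mp (pts_mem hcov (i+1))
    have hf := fact1 (C.pts i) (pts_mem hcov i) _ (din_mem C i) _ (dout_mem C i) hm1 hm2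
    rw [sub_dir, add_dir] at hf
    have htc : C.turnCost i = tc (C.pts i - C.pts (i-1)) (C.pts (i+1) - C.pts i) := rfl
    rw [htc]
    have hch : chgC C i ↔ classOf (C.pts (i-1)) (C.pts i) ≠ classOf (C.pts i) (C.pts (i+1)) := by
      unfold chgC
      rw [clC_pred]
      rfl
    by_cases hc : chgC C i
    · simp only [if_pos hc]
      rwa [if_pos (hch.mp hc)] at hf
    · simp only [if_neg hc]
      rw [if_neg (fun hne => hc (hch.mpr hne))] at hf
      omega
  calc cA C + cB C
      = ∑ n ∈ Finset.range C.k,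
          ((if C.pts ↑n ∈ cornersF then 1 else 0) + (if chgC C ↑n then 1 else 0) : ℕ) := by
        unfold cA cB cnt
        rw [Finset.sum_add_distrib, Finset.card_filter, Finset.card_filter]
    _ ≤ ∑ n ∈ Finset.range C.k, C.turnCost ↑n := Finset.sum_le_sum key
    _ = C.turns := rfl

/-- Step 2: at least 16 corner visits. -/
lemma cA_ge (hcov : C.covers = ↑Pfin) : 16 ≤ cA C := by
  unfold cA cnt
  rw [Finset.card_eq_sum_card_fiberwise
    (s := (Finset.range C.k).filter (fun n : ℕ => C.pts ↑n ∈ cornersF))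
    (f := fun n : ℕ => C.pts ↑n) (t := cornersF)
    (fun x hx => (Finset.mem_filter.mp hx).2)]
  have h1 : ∀ p ∈ cornersF,
      1 ≤ (((Finset.range C.k).filter (fun n : ℕ => C.pts ↑n ∈ cornersF)).filter
            (fun n : ℕ => C.pts ↑n = p)).card := by
    intro p hp
    obtain ⟨n, hn, he⟩ := exists_idx hcov (cornersF_subset p hp)
    refine Finset.card_pos.mpr ⟨n, ?_⟩
    simp only [Finset.mem_filter]
    exact ⟨⟨hn, he ▸ hp⟩, he⟩
  calc (16:ℕ) = ∑ _p ∈ cornersF, 1 := by simp [Finset.sum_const, cornersF_card]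
    _ ≤ _ := Finset.sum_le_sum h1

end ArbCycle


section ArbCycle2

variable {C : GridCycle}

/-- class changes happen at crossings, with the crossing's pair. -/
lemma chg_pair (hcov : C.covers = ↑Pfin) (i : ℤ) (h : chgC C i) :
    C.pts i ∈ crossF ∧ pairC C i = crossPair (C.pts i) := by
  have hm1 : memP (C.pts i - (C.pts i - C.pts (i-1))) = true := by
    rw [sub_dir]; exact (mem_Pfin_iff _).mp (pts_mem hcov (i-1))
  have hm2 : memP (C.pts i + (C.pts (i+1) - C.pts i)) = true := by
    rw [add_dir]; exact (mem_Pfin_iff _).mp (pts_mem hcov (i+1))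
  have hne : classOf (C.pts i - (C.pts i - C.pts (i-1))) (C.pts i)
      ≠ classOf (C.pts i) (C.pts i + (C.pts (i+1) - C.pts i)) := by
    rw [sub_dir, add_dir]
    unfold chgC at h
    rwa [clC_pred] at h
  have hf := fact5 (C.pts i) (pts_mem hcov i) _ (din_mem C i) _ (dout_mem C i) hm1 hm2 hne
  rw [sub_dir, add_dir] at hf
  refine ⟨hf.1, ?_⟩
  unfold pairC
  rw [clC_pred]
  exact hf.2

/-- decomposition of the change count by pair type. -/
lemma cB_eq (hcov : C.covers = ↑Pfin) : cB C = ∑ e ∈ APfin, cPair C e := by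
  unfold cB cnt
  rw [Finset.card_eq_sum_card_fiberwise (f := fun n : ℕ => pairC C ↑n) (t := APfin)
    (fun x hx => by
      have hx' := (Finset.mem_filter.mp hx).2
      have h := chg_pair hcov ↑x hx'
      show pairC C ↑x ∈ APfin
      rw [h.2]
      exact crossPair_mem_AP _ h.1)]
  apply Finset.sum_congr rfl
  intro e _
  unfold cPair cnt
  rw [Finset.filter_filter]

/-- decomposition of each pair count by crossing pixel. -/
lemma cPair_eq (hcov : C.covers = ↑Pfin) (e : ℕ × ℕ) :
    cPair C e = ∑ p ∈ crossF.filter (fun p => crossPair p = e), cPix C p := by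
  unfold cPair cnt
  rw [Finset.card_eq_sum_card_fiberwise
    (f := fun n : ℕ => C.pts ↑n) (t := crossF.filter (fun p => crossPair p = e))
    (fun x hx => by
      have hx' := (Finset.mem_filter.mp hx).2
      have h := chg_pair hcov ↑x hx'.1
      show C.pts ↑x ∈ _
      refine Finset.mem_filter.mpr ⟨h.1, ?_⟩
      rw [← h.2]; exact hx'.2)]
  apply Finset.sum_congr rfl
  intro p hp
  unfold cPix cnt
  rw [Finset.filter_filter]
  congr 1
  apply Finset.filter_congr
  intro n hn
  simp only [Finset.mem_filter] at hp
  constructor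
  · rintro ⟨⟨hc, _⟩, hq⟩; exact ⟨hc, hq⟩
  · rintro ⟨hc, hq⟩
    have h := chg_pair hcov ↑n hc
    rw [hq] at h
    exact ⟨⟨hc, h.2.trans hp.2⟩, hq⟩

end ArbCycle2


section ArbCycle3

variable {C : GridCycle}

lemma cPix_even (hcov : C.covers = ↑Pfin)
    (hE : ∀ u ∈ (↑Pfin : Set Pixel), ∀ v ∈ (↑Pfin : Set Pixel),
      Adjacent u v → edgeUses [C] u v = 1)
    {p : Pixel} (hp : p ∈ crossF) : Even (cPix C p) := by
  classical
  set X := (crossPair p).1 with hX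
  set Y := (crossPair p).2 with hY
  have hXY : X ≠ Y := crossPair_ne p hp
  have hpP : p ∈ Pfin := crossF_subset p hp
  set S := (Finset.range C.k).filter (fun n : ℕ => C.pts ↑n = p) with hS
  -- class of in-edge and out-edge at visits of p
  have hin : ∀ n ∈ S, clC C (↑n - 1) = X ∨ clC C (↑n - 1) = Y := by
    intro n hn
    have he : C.pts ↑n = p := (Finset.mem_filter.mp hn).2
    have hd : p - C.pts (↑n - 1) ∈ dirL := by
      have := din_mem C ↑n; rwa [he] at this
    have hm : memP (p - (p - C.pts (↑n - 1))) = true := by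
      rw [sub_dir]; exact (mem_Pfin_iff _).mp (pts_mem hcov _)
    have := fact6in p hp _ hd hm
    rw [sub_dir] at this
    rw [clC_pred, he]
    exact this
  have hout : ∀ n ∈ S, clC C ↑n = X ∨ clC C ↑n = Y := by
    intro n hn
    have he : C.pts ↑n = p := (Finset.mem_filter.mp hn).2
    have hd : C.pts (↑n + 1) - p ∈ dirL := by
      have := dout_mem C ↑n; rwa [he] at this
    have hm : memP (p + (C.pts (↑n + 1) - p)) = true := by
      rw [add_dir]; exact (mem_Pfin_iff _).mp (pts_mem hcov _)
    have := fact6out p hp _ hd hm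
    rw [add_dir] at this
    unfold clC
    rw [he]
    exact this
  -- pointwise identity
  have key : ∀ n ∈ S,
      ((if chgC C ↑n then 1 else 0) +
        2 * (if clC C (↑n - 1) = X ∧ clC C ↑n = X then 1 else 0) : ℕ)
      = (if clC C (↑n - 1) = X then 1 else 0) + (if clC C ↑n = X then 1 else 0) := by
    intro n hn
    rcases hin n hn with h1 | h1 <;> rcases hout n hn with h2 | h2 <;>
      simp [chgC, h1, h2, hXY, Ne.symm hXY]
  have hsum : (S.filter (fun n : ℕ => chgC C ↑n)).card
      + 2 * (S.filter (fun n : ℕ => clC C (↑n - 1) = X ∧ clC C ↑n = X)).card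
      = (S.filter (fun n : ℕ => clC C (↑n - 1) = X)).card
      + (S.filter (fun n : ℕ => clC C ↑n = X)).card := by
    rw [Finset.card_filter, Finset.card_filter, Finset.card_filter, Finset.card_filter,
      Finset.mul_sum, ← Finset.sum_add_distrib, ← Finset.sum_add_distrib]
    exact Finset.sum_congr rfl key
  -- the two neighbour sets
  set Vx := Pfin.filter (fun v => Adjacent p v ∧ classOf p v = X) with hVx
  have hVcard : Vx.card = 2 := fact8 p hp
  -- outX as a fiberwise sum
  have houtX : (S.filter (fun n : ℕ => clC C ↑n = X)).card
      = ∑ v ∈ Vx, ((Finset.range C.k).filter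
          (fun n : ℕ => C.pts ↑n = p ∧ C.pts (↑n + 1) = v)).card := by
    rw [Finset.card_eq_sum_card_fiberwise (f := fun n : ℕ => C.pts (↑n + 1)) (t := Vx)
      (fun x hx => by
        simp only [hS, Finset.coe_filter, Set.mem_setOf_eq, Finset.mem_filter] at hx
        obtain ⟨⟨_, he⟩, hcl⟩ := hx
        refine Finset.mem_filter.mpr ⟨pts_mem hcov _, ?_, ?_⟩
        · have := C.adj ↑x; rwa [he] at this
        · unfold clC at hcl; rwa [he] at hcl)]
    apply Finset.sum_congr rfl
    intro v hv
    congr 1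
    ext n
    simp only [hS, Finset.mem_filter, Finset.mem_range]
    constructor
    · rintro ⟨⟨⟨hr, he⟩, _⟩, hv'⟩; exact ⟨hr, he, hv'⟩
    · rintro ⟨hr, he, hv'⟩
      refine ⟨⟨⟨hr, he⟩, ?_⟩, hv'⟩
      unfold clC
      rw [he, hv']
      exact (Finset.mem_filter.mp hv).2.2
  -- inX as a fiberwise sum
  have hclassin : ∀ v ∈ Vx, classOf v p = X := by
    intro v hv
    obtain ⟨hvP, hadj, hcl⟩ := Finset.mem_filter.mp hv
    have hd : v - p ∈ dirL := adj_dir hadj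
    have h7 := fact7 p hp _ hd (by rw [add_dir]; exact (mem_Pfin_iff _).mp hvP)
    rw [add_dir] at h7
    rw [h7]; exact hcl
  have hinX : (S.filter (fun n : ℕ => clC C (↑n - 1) = X)).card
      = ∑ v ∈ Vx, ((Finset.range C.k).filter
          (fun n : ℕ => C.pts ↑n = p ∧ C.pts (↑n - 1) = v)).card := by
    rw [Finset.card_eq_sum_card_fiberwise (f := fun n : ℕ => C.pts (↑n - 1)) (t := Vx)
      (fun x hx => by
        simp only [hS, Finset.coe_filter, Set.mem_setOf_eq, Finset.mem_filter] at hx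
        obtain ⟨⟨_, he⟩, hcl⟩ := hx
        have hdin : p - C.pts (↑x - 1) ∈ dirL := by
          have := din_mem C ↑x; rwa [he] at this
        have hmem : C.pts (↑x - 1) ∈ Pfin := pts_mem hcov _
        refine Finset.mem_filter.mpr ⟨hmem, ?_, ?_⟩
        · have hadj := C.adj (↑x - 1)
          rw [sub_add_one, he] at hadj
          exact adj_comm hadj
        · -- classOf p (pts (x-1)) = X from clC and fact7
          have hcl' : classOf (C.pts (↑x - 1)) p = X := by
            rw [clC_pred, he] at hcl; exact hcl
          have hd : C.pts (↑x - 1) - p ∈ dirL := by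
            have := neg_dir hdin; rwa [neg_sub] at this
          have h7 := fact7 p hp _ hd
            (by rw [add_dir]; exact (mem_Pfin_iff _).mp hmem)
          rw [add_dir] at h7
          rw [← h7]; exact hcl')]
    apply Finset.sum_congr rfl
    intro v hv
    congr 1
    ext n
    simp only [hS, Finset.mem_filter, Finset.mem_range]
    constructor
    · rintro ⟨⟨⟨hr, he⟩, _⟩, hv'⟩; exact ⟨hr, he, hv'⟩
    · rintro ⟨hr, he, hv'⟩
      refine ⟨⟨⟨hr, he⟩, ?_⟩, hv'⟩
      rw [clC_pred, he, hv']
      exact hclassin v hv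
  -- shift each in-fiber
  have hshift : ∀ v : Pixel,
      ((Finset.range C.k).filter (fun n : ℕ => C.pts ↑n = p ∧ C.pts (↑n - 1) = v)).card
      = ((Finset.range C.k).filter (fun n : ℕ => C.pts (↑n + 1) = p ∧ C.pts ↑n = v)).card := by
    intro v
    have hs := cnt_shift C.k (k_pos C) (fun i => C.pts i = p ∧ C.pts (i - 1) = v) (by
      intro i
      show (C.pts (i + C.k) = p ∧ C.pts (i + C.k - 1) = v) ↔ _
      rw [C.periodic i, show i + (C.k:ℤ) - 1 = (i - 1) + C.k from by ring, C.periodic (i-1)])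
    unfold cnt at hs
    rw [← hs]
    congr 1
    apply Finset.filter_congr
    intro n _
    show (C.pts (↑n + 1) = p ∧ C.pts (↑n + 1 - 1) = v) ↔ _
    rw [show (↑n:ℤ) + 1 - 1 = ↑n from by ring]
  -- edge uses
  have hedge : ∀ v ∈ Vx,
      ((Finset.range C.k).filter (fun n : ℕ => C.pts ↑n = p ∧ C.pts (↑n + 1) = v)).card
      + ((Finset.range C.k).filter (fun n : ℕ => C.pts (↑n + 1) = p ∧ C.pts ↑n = v)).card
      = 1 := by
    intro v hv
    obtain ⟨hvP, hadj, _⟩ := Finset.mem_filter.mp hv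
    have hne : p ≠ v := adj_ne hadj
    have hE1 := hE p (Finset.mem_coe.mpr hpP) v (Finset.mem_coe.mpr hvP) hadj
    unfold edgeUses at hE1
    simp only [List.map_cons, List.map_nil, List.sum_cons, List.sum_nil, add_zero] at hE1
    rw [Finset.filter_or] at hE1
    rw [Finset.card_union_of_disjoint (by
      rw [Finset.disjoint_left]
      intro a ha hb
      have h1 := (Finset.mem_filter.mp ha).2
      have h2 := (Finset.mem_filter.mp hb).2
      exact hne (h1.1.symm.trans h2.1))] at hE1
    have h2 : (Finset.range C.k).filter (fun i : ℕ => C.pts ↑i = v ∧ C.pts (↑i + 1) = p)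
        = (Finset.range C.k).filter (fun n : ℕ => C.pts (↑n + 1) = p ∧ C.pts ↑n = v) := by
      apply Finset.filter_congr
      intro n _
      exact ⟨fun ⟨a, b⟩ => ⟨b, a⟩, fun ⟨a, b⟩ => ⟨b, a⟩⟩
    rw [h2] at hE1
    exact hE1
  -- combine
  have htotal : (S.filter (fun n : ℕ => clC C (↑n - 1) = X)).card
      + (S.filter (fun n : ℕ => clC C ↑n = X)).card = 2 := by
    rw [hinX, houtX, ← Finset.sum_add_distrib]
    have : ∀ v ∈ Vx, ((Finset.range C.k).filter
          (fun n : ℕ => C.pts ↑n = p ∧ C.pts (↑n - 1) = v)).card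
        + ((Finset.range C.k).filter
          (fun n : ℕ => C.pts ↑n = p ∧ C.pts (↑n + 1) = v)).card = 1 := by
      intro v hv
      rw [hshift v, add_comm]
      exact hedge v hv
    rw [Finset.sum_congr rfl this, Finset.sum_const, hVcard]
    simp
  have hT : cPix C p = (S.filter (fun n : ℕ => chgC C ↑n)).card := by
    unfold cPix cnt
    rw [hS, Finset.filter_filter]
    congr 1
    apply Finset.filter_congr
    intro n _
    show chgC C ↑n ∧ C.pts ↑n = p ↔ C.pts ↑n = p ∧ chgC C ↑n
    exact and_comm
  rw [Nat.even_iff]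
  omega

end ArbCycle3


section ArbCycle4

variable {C : GridCycle}

lemma att_of (hcov : C.covers = ↑Pfin) (q : Pixel) (hq : q ∈ Pfin) (x : ℕ)
    (hqc : ∀ d ∈ dirL, memP (q + d) = true → classOf q (q + d) = x) :
    ∃ n ∈ Finset.range C.k, clC C ↑n = x := by
  obtain ⟨n, hn, he⟩ := exists_idx hcov hq
  refine ⟨n, hn, ?_⟩
  unfold clC
  rw [he]
  have hd : C.pts (↑n+1) - q ∈ dirL := by
    have := dout_mem C ↑n; rwa [he] at this
  have := hqc _ hd (by rw [add_dir]; exact (mem_Pfin_iff _).mp (pts_mem hcov _))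
  rwa [add_dir] at this

lemma attained0 (hcov : C.covers = ↑Pfin) : ∃ n ∈ Finset.range C.k, clC C ↑n = 0 :=
  att_of hcov (0,5) privN_mem 0 (fun d hd hm => ((fact2 d hd).1) hm)

lemma attained1 (hcov : C.covers = ↑Pfin) : ∃ n ∈ Finset.range C.k, clC C ↑n = 1 :=
  att_of hcov (5,0) privE_mem 1 (fun d hd hm => ((fact2 d hd).2.1) hm)

lemma attained2 (hcov : C.covers = ↑Pfin) : ∃ n ∈ Finset.range C.k, clC C ↑n = 2 :=
  att_of hcov (0,-5) privS_mem 2 (fun d hd hm => ((fact2 d hd).2.2.1) hm)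

lemma attained3 (hcov : C.covers = ↑Pfin) : ∃ n ∈ Finset.range C.k, clC C ↑n = 3 :=
  att_of hcov (-5,0) privW_mem 3 (fun d hd hm => ((fact2 d hd).2.2.2) hm)

lemma reach {K : Finset ℕ}
    (hK : ∀ i : ℤ, 0 < i → i < C.k → chgC C i → ((clC C (i-1) ∈ K) ↔ (clC C i ∈ K))) :
    ∀ n : ℕ, n < C.k → (clC C ↑n ∈ K ↔ clC C 0 ∈ K) := by
  intro n
  induction n with
  | zero => intro _; rw [Nat.cast_zero]
  | succ m ih =>
    intro h
    have hm := ih (by omega)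
    have e1 : ((m:ℤ)+1) - 1 = (m:ℤ) := by ring
    have e2 : ((m+1:ℕ):ℤ) = (m:ℤ)+1 := by push_cast; ring
    by_cases hc : chgC C ((m:ℤ)+1)
    · have hiff := hK ((m:ℤ)+1) (by positivity) (by exact_mod_cast h) hc
      rw [e1] at hiff
      rw [e2]
      exact hiff.symm.trans hm
    · unfold chgC at hc
      push_neg at hc
      rw [e1] at hc
      rw [e2, ← hc]
      exact hm

lemma no_cross_contra (hcov : C.covers = ↑Pfin) {K : Finset ℕ} {x y : ℕ}
    (hax : ∃ n ∈ Finset.range C.k, clC C ↑n = x)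
    (hay : ∃ n ∈ Finset.range C.k, clC C ↑n = y)
    (hxK : x ∈ K) (hyK : y ∉ K)
    (hK : ∀ i : ℤ, 0 < i → i < C.k → chgC C i → ((clC C (i-1) ∈ K) ↔ (clC C i ∈ K))) :
    False := by
  obtain ⟨nx, hnx, hex⟩ := hax
  obtain ⟨ny, hny, hey⟩ := hay
  have h1 := reach hK nx (Finset.mem_range.mp hnx)
  have h2 := reach hK ny (Finset.mem_range.mp hny)
  rw [hex] at h1; rw [hey] at h2
  exact hyK (h2.mpr (h1.mp hxK))

lemma cPair_pos (i : ℤ) (h0 : 0 < i) (hik : i < C.k) (hc : chgC C i) :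
    0 < cPair C (pairC C i) := by
  unfold cPair cnt
  apply Finset.card_pos.mpr
  refine ⟨i.toNat, ?_⟩
  have he : ((i.toNat : ℕ) : ℤ) = i := Int.toNat_of_nonneg (by omega)
  simp only [Finset.mem_filter, Finset.mem_range]
  refine ⟨by omega, ?_, ?_⟩
  · rw [he]; exact hc
  · rw [he]

lemma pair_vals (i : ℤ) {e : ℕ × ℕ} (h : pairC C i = e) :
    (clC C (i-1) = e.1 ∧ clC C i = e.2) ∨ (clC C (i-1) = e.2 ∧ clC C i = e.1) := by
  unfold pairC at h
  rcases le_total (clC C (i-1)) (clC C i) with hle | hle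
  · left
    rw [min_eq_left hle, max_eq_right hle] at h
    exact ⟨by rw [← h], by rw [← h]⟩
  · right
    rw [min_eq_right hle, max_eq_left hle] at h
    exact ⟨by rw [← h], by rw [← h]⟩

lemma cB_ge (hcov : C.covers = ↑Pfin)
    (hE : ∀ u ∈ (↑Pfin : Set Pixel), ∀ v ∈ (↑Pfin : Set Pixel),
      Adjacent u v → edgeUses [C] u v = 1) : 6 ≤ cB C := by
  by_contra hlt
  push_neg at hlt
  have hsum : cB C = cPair C (0,1) + cPair C (1,2) + cPair C (2,3) + cPair C (0,3) := by
    rw [cB_eq hcov]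
    rw [show APfin = {(0,1),(1,2),(2,3),(0,3)} from rfl]
    rw [Finset.sum_insert (by decide), Finset.sum_insert (by decide),
      Finset.sum_insert (by decide), Finset.sum_singleton]
    ring
  have heven : ∀ e ∈ APfin, Even (cPair C e) := by
    intro e he
    rw [cPair_eq hcov e, even_iff_two_dvd]
    exact Finset.dvd_sum (fun p hp =>
      (cPix_even hcov hE (Finset.mem_filter.mp hp).1).two_dvd)
  obtain ⟨r1, hr1⟩ := heven (0,1) (by decide)
  obtain ⟨r2, hr2⟩ := heven (1,2) (by decide)
  obtain ⟨r3, hr3⟩ := heven (2,3) (by decide)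
  obtain ⟨r4, hr4⟩ := heven (0,3) (by decide)
  have hstepAll : ∀ i : ℤ, 0 < i → i < C.k → chgC C i →
      pairC C i = (0,1) ∨ pairC C i = (1,2) ∨ pairC C i = (2,3) ∨ pairC C i = (0,3) := by
    intro i _ _ hc
    have h := chg_pair hcov i hc
    have hm := crossPair_mem_AP _ h.1
    rw [← h.2] at hm
    simpa [APfin, Finset.mem_insert] using hm
  have hcases : (cPair C (0,1) = 0 ∧ cPair C (1,2) = 0) ∨
      (cPair C (0,1) = 0 ∧ cPair C (2,3) = 0) ∨
      (cPair C (0,1) = 0 ∧ cPair C (0,3) = 0) ∨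
      (cPair C (1,2) = 0 ∧ cPair C (2,3) = 0) ∨
      (cPair C (1,2) = 0 ∧ cPair C (0,3) = 0) ∨
      (cPair C (2,3) = 0 ∧ cPair C (0,3) = 0) := by omega
  have step_of : ∀ (K : Finset ℕ) (z1 z2 : ℕ × ℕ),
      cPair C z1 = 0 → cPair C z2 = 0 →
      (∀ e : ℕ × ℕ, (e = (0,1) ∨ e = (1,2) ∨ e = (2,3) ∨ e = (0,3)) → e ≠ z1 → e ≠ z2 →
        ((e.1 ∈ K) ↔ (e.2 ∈ K))) →
      ∀ i : ℤ, 0 < i → i < C.k → chgC C i → ((clC C (i-1) ∈ K) ↔ (clC C i ∈ K)) := by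
    intro K z1 z2 hz1 hz2 hKe i h0 hik hc
    have hp := hstepAll i h0 hik hc
    have hpos := cPair_pos i h0 hik hc
    have hne1 : pairC C i ≠ z1 := by intro h; rw [h, hz1] at hpos; omega
    have hne2 : pairC C i ≠ z2 := by intro h; rw [h, hz2] at hpos; omega
    have hKiff := hKe (pairC C i) hp hne1 hne2
    rcases pair_vals i rfl with ⟨ha, hb⟩ | ⟨ha, hb⟩
    · rw [ha, hb]; exact hKiff
    · rw [ha, hb]; exact hKiff.symm
  rcases hcases with ⟨hz1, hz2⟩ | ⟨hz1, hz2⟩ | ⟨hz1, hz2⟩ | ⟨hz1, hz2⟩ | ⟨hz1, hz2⟩ | ⟨hz1, hz2⟩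
  · exact no_cross_contra hcov (attained1 hcov) (attained0 hcov)
      (by decide : (1:ℕ) ∈ ({1} : Finset ℕ)) (by decide)
      (step_of {1} _ _ hz1 hz2 (by rintro e (rfl|rfl|rfl|rfl) h1 h2 <;> first | (exact absurd rfl h1) | (exact absurd rfl h2) | decide))
  · exact no_cross_contra hcov (attained1 hcov) (attained0 hcov)
      (by decide : (1:ℕ) ∈ ({1,2} : Finset ℕ)) (by decide)
      (step_of {1,2} _ _ hz1 hz2 (by rintro e (rfl|rfl|rfl|rfl) h1 h2 <;> first | (exact absurd rfl h1) | (exact absurd rfl h2) | decide))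
  · exact no_cross_contra hcov (attained0 hcov) (attained1 hcov)
      (by decide : (0:ℕ) ∈ ({0} : Finset ℕ)) (by decide)
      (step_of {0} _ _ hz1 hz2 (by rintro e (rfl|rfl|rfl|rfl) h1 h2 <;> first | (exact absurd rfl h1) | (exact absurd rfl h2) | decide))
  · exact no_cross_contra hcov (attained2 hcov) (attained0 hcov)
      (by decide : (2:ℕ) ∈ ({2} : Finset ℕ)) (by decide)
      (step_of {2} _ _ hz1 hz2 (by rintro e (rfl|rfl|rfl|rfl) h1 h2 <;> first | (exact absurd rfl h1) | (exact absurd rfl h2) | decide))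
  · exact no_cross_contra hcov (attained0 hcov) (attained2 hcov)
      (by decide : (0:ℕ) ∈ ({0,1} : Finset ℕ)) (by decide)
      (step_of {0,1} _ _ hz1 hz2 (by rintro e (rfl|rfl|rfl|rfl) h1 h2 <;> first | (exact absurd rfl h1) | (exact absurd rfl h2) | decide))
  · exact no_cross_contra hcov (attained3 hcov) (attained0 hcov)
      (by decide : (3:ℕ) ∈ ({3} : Finset ℕ)) (by decide)
      (step_of {3} _ _ hz1 hz2 (by rintro e (rfl|rfl|rfl|rfl) h1 h2 <;> first | (exact absurd rfl h1) | (exact absurd rfl h2) | decide))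

lemma euler_lower (C : GridCycle) (hcov : C.covers = ↑Pfin)
    (hE : ∀ u ∈ (↑Pfin : Set Pixel), ∀ v ∈ (↑Pfin : Set Pixel),
      Adjacent u v → edgeUses [C] u v = 1) : 22 ≤ C.turns :=
  calc (22:ℕ) = 16 + 6 := rfl
    _ ≤ cA C + cB C := Nat.add_le_add (cA_ge hcov) (cB_ge hcov hE)
    _ ≤ C.turns := turns_ge hcov

end ArbCycle4


/-! ### Properties of the explicit region and cycles -/

lemma tourC_covers : tourC.covers = (↑Pfin : Set Pixel) := by
  show Set.range (cpts tourList) = _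
  rw [range_cpts tourList (by decide), tourList_toFinset]

lemma eulC_covers : eulC.covers = (↑Pfin : Set Pixel) := by
  show Set.range (cpts eulList) = _
  rw [range_cpts eulList (by decide), eulList_toFinset]

lemma connected_of_cycle (C : GridCycle) (hcov : C.covers = ↑Pfin) :
    ConnectedIn (↑Pfin : Set Pixel) := by
  intro p hp q hq
  have hp' : p ∈ C.covers := by rw [hcov]; exact hp
  have hq' : q ∈ C.covers := by rw [hcov]; exact hq
  obtain ⟨i, hi⟩ := hp'
  obtain ⟨j, hj⟩ := hq'
  have step : ∀ n : ℕ, Relation.ReflTransGen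
      (fun a b => b ∈ (↑Pfin : Set Pixel) ∧ Adjacent a b) (C.pts i) (C.pts (i + n)) := by
    intro n
    induction n with
    | zero => simpa using Relation.ReflTransGen.refl
    | succ m ih =>
      refine ih.tail ⟨Finset.mem_coe.mpr (pts_mem hcov _), ?_⟩
      have e : i + ((m:ℤ)+1) = (i + (m:ℤ)) + 1 := by ring
      have e2 : ((m+1:ℕ):ℤ) = (m:ℤ)+1 := by push_cast; ring
      rw [e2, e]
      exact C.adj (i + (m:ℤ))
  have hb := emod_bounds (j - i) C.k (k_pos C)
  have hfin : C.pts (i + ((j - i) % C.k).toNat) = C.pts j := by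
    have he : ((((j - i) % C.k).toNat : ℕ) : ℤ) = (j - i) % C.k :=
      Int.toNat_of_nonneg hb.1
    rw [he]
    have h3 := pts_add_mul C (i + (j - i) % C.k) ((j - i) / C.k)
    have h4 : i + (j - i) % C.k + C.k * ((j - i) / C.k) = j := by
      have h5 := Int.emod_add_mul_ediv (j - i) C.k
      linarith
    rw [h4] at h3
    exact h3.symm
  have := step ((j - i) % C.k).toNat
  rw [hfin, hi, hj] at this
  exact this

lemma region_isRegion : IsRegion (↑Pfin : Set Pixel) :=
  ⟨Pfin.finite_toSet, ⟨(0,5), Finset.mem_coe.mpr privN_mem⟩,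
    connected_of_cycle tourC tourC_covers⟩

lemma region_thin : ThinRegion (↑Pfin : Set Pixel) := by
  rintro ⟨x, y, h1, h2, h3, h4⟩
  exact fact_thin (x,y) (Finset.mem_coe.mp h1)
    ⟨(mem_Pfin_iff _).mp (Finset.mem_coe.mp h2),
     (mem_Pfin_iff _).mp (Finset.mem_coe.mp h3),
     (mem_Pfin_iff _).mp (Finset.mem_coe.mp h4)⟩

lemma region_eulerian : EulerianRegion (↑Pfin : Set Pixel) := by
  intro p hp
  have hset : {q ∈ (↑Pfin : Set Pixel) | Adjacent p q}
      = ↑(Pfin.filter (fun q => Adjacent p q)) := by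
    ext q
    simp [Finset.mem_filter]
  unfold nbrCount
  rw [hset, Set.ncard_coe_finset]
  exact fact_deg p (Finset.mem_coe.mp hp)

lemma tourC_isTour : IsTour (↑Pfin : Set Pixel) tourC := tourC_covers

lemma eulC_isEulerian : IsEulerianTour (↑Pfin : Set Pixel) eulC :=
  ⟨eulC_covers, fun u hu v hv hadj =>
    eulC_edges u (Finset.mem_coe.mp hu) v (Finset.mem_coe.mp hv) hadj⟩

end NME

/-- There is a thin Eulerian region whose minimum number of turns over all
tours is strictly smaller than its minimum number of turns over all Eulerian
tours; in particular no turn-minimal tour of it is an Eulerian tour. -/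
theorem exists_thin_eulerian_region_no_minimal_eulerian_tour :
    ∃ P : Set Pixel, IsRegion P ∧ ThinRegion P ∧ EulerianRegion P ∧
      sInf {t | ∃ C : GridCycle, IsTour P C ∧ C.turns = t} <
      sInf {t | ∃ C : GridCycle, IsEulerianTour P C ∧ C.turns = t} := by
  refine ⟨(↑NME.Pfin : Set Pixel), NME.region_isRegion, NME.region_thin,
    NME.region_eulerian, ?_⟩
  have h1 : sInf {t | ∃ C : GridCycle, IsTour (↑NME.Pfin : Set Pixel) C ∧ C.turns = t} ≤ 20 :=
    Nat.sInf_le ⟨NME.tourC, NME.tourC_isTour, NME.tourC_turns⟩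
  have hne : {t | ∃ C : GridCycle,
      IsEulerianTour (↑NME.Pfin : Set Pixel) C ∧ C.turns = t}.Nonempty :=
    ⟨NME.eulC.turns, NME.eulC, NME.eulC_isEulerian, rfl⟩
  obtain ⟨C, hC, hCt⟩ := Nat.sInf_mem hne
  have h3 : 22 ≤ C.turns := NME.euler_lower C hC.1 hC.2
  omega
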